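/- Under the standing assumptions on the 3-block Bregman ADMM, if the sequence {(x^k, y^k, z^k)} is bounded, then the sequence {L̂(ŵ^k)}_{k≥1} is nonincreasing and converges to a finite limit. -/

import Mathlib

/-!
Each primal update is a Bregman proximal step on a function that is strongly convex (the block
objective or its kernel is), so it lowers `L_α` by `(μᵢ/2)‖Δ‖²`, while the multiplier update raises
it by `‖Δp‖²/α`. The optimality condition of the `z`-subproblem reads
`Cᵀp^{k+1} = ∇φ₃(z^k) − ∇h(z^{k+1}) − ∇φ₃(z^{k+1})`, so by the rank condition on `C` the increase
`‖Δp‖²/α` is controlled by `‖Δz^{k+1}‖²` and `‖Δz^k‖²`. The term `σ₀‖z − ẑ‖²` of `L̂` absorbs the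
second, and the lower bound on `α` lets the `z`-decrease absorb the first: `L̂` is nonincreasing.
For bounded primal iterates the same identity bounds the multipliers, and `L̂` is then bounded
below (`f`, `g` lower semicontinuous and `h` continuous on a ball, and
`⟨p^k, Ax^k + By^k + Cz^k⟩ = ⟨p^k, p^k − p^{k−1}⟩/α`), so it converges.
-/

open RealInnerProductSpace Filter

noncomputable section

/-- Euclidean space `ℝ^n`. -/
abbrev Eu (n : ℕ) := EuclideanSpace ℝ (Fin n)

/-- The Bregman distance `Δ_φ(u,v) = φ(u) − φ(v) − ⟨∇φ(v), u−v⟩` associated with a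
differentiable function `φ` whose gradient is `φ'`. -/
def Breg {n : ℕ} (φ : Eu n → ℝ) (φ' : Eu n → Eu n) (u v : Eu n) : ℝ :=
  φ u - φ v - ⟪φ' v, u - v⟫

/-- `F` is `μ`-strongly convex iff `F − (μ/2)‖·‖²` is convex. -/
def StrongConvex {n : ℕ} (μ : ℝ) (F : Eu n → ℝ) : Prop :=
  ConvexOn ℝ Set.univ (fun u => F u - μ / 2 * ‖u‖ ^ 2)

/-- The augmented Lagrangian
`L_α(x,y,z,p) = f(x)+g(y)+h(z)+⟨p, Ax+By+Cz⟩+(α/2)‖Ax+By+Cz‖²`. -/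
def Lag {n₁ n₂ n₃ m : ℕ} (f : Eu n₁ → ℝ) (g : Eu n₂ → ℝ) (h : Eu n₃ → ℝ)
    (A : Eu n₁ →L[ℝ] Eu m) (B : Eu n₂ →L[ℝ] Eu m) (C : Eu n₃ →L[ℝ] Eu m)
    (α : ℝ) (x : Eu n₁) (y : Eu n₂) (z : Eu n₃) (p : Eu m) : ℝ :=
  f x + g y + h z + ⟪p, A x + B y + C z⟫ + α / 2 * ‖A x + B y + C z‖ ^ 2

/-- All the data and standing assumptions of the 3-block Bregman ADMM:
objective functions `f, g, h`, Bregman kernels `φ₁, φ₂, φ₃` (with gradients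
`φ₁', φ₂', φ₃'`, and `h'` the gradient of `h`), matrices `A, B, C` (as linear maps),
parameters, iterate sequences `x, y, z, p`, and the standing hypotheses
(lower semicontinuity of `f, g`; differentiability with Lipschitz gradients;
convexity of kernels; the strong-convexity alternatives; quantitative full row rank
of `C`; the lower bound on `α`; and the BADMM update rules, where each of the three
primal updates is a global minimizer of the corresponding subproblem). -/
structure BADMM (n₁ n₂ n₃ m : ℕ) where
  f : Eu n₁ → ℝ
  g : Eu n₂ → ℝ
  h : Eu n₃ → ℝ
  φ₁ : Eu n₁ → ℝ
  φ₂ : Eu n₂ → ℝ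
  φ₃ : Eu n₃ → ℝ
  h' : Eu n₃ → Eu n₃
  φ₁' : Eu n₁ → Eu n₁
  φ₂' : Eu n₂ → Eu n₂
  φ₃' : Eu n₃ → Eu n₃
  A : Eu n₁ →L[ℝ] Eu m
  B : Eu n₂ →L[ℝ] Eu m
  C : Eu n₃ →L[ℝ] Eu m
  α : ℝ
  ℓh : ℝ
  ℓ₁ : ℝ
  ℓ₂ : ℝ
  ℓ₃ : ℝ
  μ₁ : ℝ
  μ₂ : ℝ
  μ₃ : ℝ
  σC : ℝ
  x : ℕ → Eu n₁
  y : ℕ → Eu n₂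
  z : ℕ → Eu n₃
  p : ℕ → Eu m
  hα_pos : 0 < α
  hf_lsc : LowerSemicontinuous f
  hg_lsc : LowerSemicontinuous g
  hgrad_h : ∀ v, HasGradientAt h (h' v) v
  hgrad_φ₁ : ∀ v, HasGradientAt φ₁ (φ₁' v) v
  hgrad_φ₂ : ∀ v, HasGradientAt φ₂ (φ₂' v) v
  hgrad_φ₃ : ∀ v, HasGradientAt φ₃ (φ₃' v) v
  hℓh_nonneg : 0 ≤ ℓh
  hℓ₁_nonneg : 0 ≤ ℓ₁
  hℓ₂_nonneg : 0 ≤ ℓ₂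
  hℓ₃_nonneg : 0 ≤ ℓ₃
  hlip_h : ∀ a b, ‖h' a - h' b‖ ≤ ℓh * ‖a - b‖
  hlip_φ₁ : ∀ a b, ‖φ₁' a - φ₁' b‖ ≤ ℓ₁ * ‖a - b‖
  hlip_φ₂ : ∀ a b, ‖φ₂' a - φ₂' b‖ ≤ ℓ₂ * ‖a - b‖
  hlip_φ₃ : ∀ a b, ‖φ₃' a - φ₃' b‖ ≤ ℓ₃ * ‖a - b‖
  hφ₁_convex : ConvexOn ℝ Set.univ φ₁
  hφ₂_convex : ConvexOn ℝ Set.univ φ₂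
  hφ₃_convex : ConvexOn ℝ Set.univ φ₃
  hμ₁_pos : 0 < μ₁
  hμ₂_pos : 0 < μ₂
  hμ₃_pos : 0 < μ₃
  hsc₁ : StrongConvex μ₁ f ∨ StrongConvex μ₁ φ₁
  hsc₂ : StrongConvex μ₂ g ∨ StrongConvex μ₂ φ₂
  hsc₃ : StrongConvex μ₃ h ∨ StrongConvex μ₃ φ₃
  hσC_pos : 0 < σC
  hC_rank : ∀ u : Eu m, σC * ‖u‖ ^ 2 ≤ ‖(ContinuousLinearMap.adjoint C) u‖ ^ 2
  hα_large : 4 * ((ℓh + ℓ₃) ^ 2 + ℓ₃ ^ 2) / (μ₃ * σC) < α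
  hx_min : ∀ k, ∀ ξ : Eu n₁,
    Lag f g h A B C α (x (k+1)) (y k) (z k) (p k) + Breg φ₁ φ₁' (x (k+1)) (x k) ≤
      Lag f g h A B C α ξ (y k) (z k) (p k) + Breg φ₁ φ₁' ξ (x k)
  hy_min : ∀ k, ∀ ξ : Eu n₂,
    Lag f g h A B C α (x (k+1)) (y (k+1)) (z k) (p k) + Breg φ₂ φ₂' (y (k+1)) (y k) ≤
      Lag f g h A B C α (x (k+1)) ξ (z k) (p k) + Breg φ₂ φ₂' ξ (y k)
  hz_min : ∀ k, ∀ ξ : Eu n₃,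
    Lag f g h A B C α (x (k+1)) (y (k+1)) (z (k+1)) (p k) + Breg φ₃ φ₃' (z (k+1)) (z k) ≤
      Lag f g h A B C α (x (k+1)) (y (k+1)) ξ (p k) + Breg φ₃ φ₃' ξ (z k)
  hp_upd : ∀ k, p (k+1) = p k + α • (A (x (k+1)) + B (y (k+1)) + C (z (k+1)))

namespace BADMM

variable {n₁ n₂ n₃ m : ℕ} (P : BADMM n₁ n₂ n₃ m)

/-- `σ₀ = 2ℓ₃²/(ασ_C)`. -/
def σ0 : ℝ := 2 * P.ℓ₃ ^ 2 / (P.α * P.σC)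

/-- `σ₁ = (1/2)·min(μ₁, μ₂, μ₃ − 4(ℓ_h+ℓ₃)²/(ασ_C) − 4ℓ₃²/(ασ_C))`. -/
def σ1 : ℝ :=
  (1 / 2) * min P.μ₁ (min P.μ₂
    (P.μ₃ - 4 * (P.ℓh + P.ℓ₃) ^ 2 / (P.α * P.σC) - 4 * P.ℓ₃ ^ 2 / (P.α * P.σC)))

/-- The augmented Lagrangian of the problem, `L_α`. -/
def L (x : Eu n₁) (y : Eu n₂) (z : Eu n₃) (p : Eu m) : ℝ :=
  Lag P.f P.g P.h P.A P.B P.C P.α x y z p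

/-- `L̂(x,y,z,p,ẑ) = L_α(x,y,z,p) + σ₀‖z−ẑ‖²`. -/
def Lhat (x : Eu n₁) (y : Eu n₂) (z : Eu n₃) (p : Eu m) (zh : Eu n₃) : ℝ :=
  P.L x y z p + P.σ0 * ‖z - zh‖ ^ 2

/-- `‖w^{k+1}−w^k‖²`. -/
def dw2 (k : ℕ) : ℝ :=
  ‖P.x (k+1) - P.x k‖ ^ 2 + ‖P.y (k+1) - P.y k‖ ^ 2 +
    ‖P.z (k+1) - P.z k‖ ^ 2 + ‖P.p (k+1) - P.p k‖ ^ 2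

end BADMM

section ConvexAnalysis

variable {E F : Type*} [NormedAddCommGroup E] [NormedSpace ℝ E] [NormedAddCommGroup F]
  [NormedSpace ℝ F]

theorem ConvexOn.apply_add_fderiv_le {s : Set E} {φ : E → ℝ} {φ' : E →L[ℝ] ℝ} {u v : E}
    (hφ : ConvexOn ℝ s φ) (hv : v ∈ s) (hu : u ∈ s) (hd : HasFDerivAt φ φ' v) :
    φ v + φ' (u - v) ≤ φ u := by
  set ℓ : ℝ →ᵃ[ℝ] E := AffineMap.lineMap v u
  have hℓ0 : ℓ 0 = v := AffineMap.lineMap_apply_zero v u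
  have hℓ1 : ℓ 1 = u := AffineMap.lineMap_apply_one v u
  have hline : ConvexOn ℝ (ℓ ⁻¹' s) (φ ∘ ℓ) := hφ.comp_affineMap ℓ
  have hderiv : HasDerivAt (φ ∘ ℓ) (φ' (u - v)) 0 :=
    hd.comp_hasDerivAt_of_eq (0 : ℝ) AffineMap.hasDerivAt_lineMap hℓ0.symm
  have := hline.le_slope_of_hasDerivAt (x := 0) (y := 1) (by simpa [hℓ0] using hv)
    (by simpa [hℓ1] using hu) zero_lt_one hderiv
  rw [slope_def_field] at this
  simp only [Function.comp_apply, hℓ0, hℓ1, sub_zero, div_one] at this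
  linarith

theorem StrongConvexOn.add_le_of_isMinOn {s : Set E} {m : ℝ} {F : E → ℝ} {a u : E}
    (hF : StrongConvexOn s m F) (ha : a ∈ s) (hu : u ∈ s) (hmin : IsMinOn F s a) :
    F a + m / 2 * ‖u - a‖ ^ 2 ≤ F u := by
  have hseg : ∀ t ∈ Set.Ioo (0 : ℝ) 1, F a + (1 - t) * (m / 2 * ‖u - a‖ ^ 2) ≤ F u := by
    rintro t ⟨ht0, ht1⟩
    have hconv := hF.2 hu ha ht0.le (sub_nonneg.2 ht1.le) (add_sub_cancel t 1)
    have hle := isMinOn_iff.1 hmin _ (hF.1 hu ha ht0.le (sub_nonneg.2 ht1.le) (add_sub_cancel t 1))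
    simp only [smul_eq_mul] at hconv
    have : t * (F a + (1 - t) * (m / 2 * ‖u - a‖ ^ 2)) ≤ t * F u := by nlinarith
    exact le_of_mul_le_mul_left this ht0
  have hlim : Tendsto (fun t : ℝ => F a + (1 - t) * (m / 2 * ‖u - a‖ ^ 2))
      (nhdsWithin 0 (Set.Ioi 0)) (nhds (F a + m / 2 * ‖u - a‖ ^ 2)) := by
    have : Continuous fun t : ℝ => F a + (1 - t) * (m / 2 * ‖u - a‖ ^ 2) := by fun_prop
    simpa using this.continuousWithinAt.tendsto (x := 0) (s := Set.Ioi 0)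
  exact le_of_tendsto hlim (eventually_of_mem (Ioo_mem_nhdsGT zero_lt_one) hseg)

theorem ConvexOn.comp_add_clm {Ψ : F → ℝ} (hΨ : ConvexOn ℝ Set.univ Ψ) (w : F) (C : E →L[ℝ] F) :
    ConvexOn ℝ Set.univ (fun ξ => Ψ (w + C ξ)) :=
  (hΨ.translate_right w).comp_linearMap C.toLinearMap

end ConvexAnalysis

section Gradient

open InnerProductSpace

variable {E F : Type*} [NormedAddCommGroup E] [InnerProductSpace ℝ E] [CompleteSpace E]
  [NormedAddCommGroup F] [InnerProductSpace ℝ F] [CompleteSpace F]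

theorem HasGradientAt.add {f g : E → ℝ} {f' g' x : E} (hf : HasGradientAt f f' x)
    (hg : HasGradientAt g g' x) : HasGradientAt (fun ξ => f ξ + g ξ) (f' + g') x := by
  rw [hasGradientAt_iff_hasFDerivAt, map_add]
  exact hf.hasFDerivAt.add hg.hasFDerivAt

theorem HasGradientAt.comp_add_clm {Ψ : F → ℝ} {g : F} (w : F) (C : E →L[ℝ] F) {ζ : E}
    (hΨ : HasGradientAt Ψ g (w + C ζ)) :
    HasGradientAt (fun ξ => Ψ (w + C ξ)) (ContinuousLinearMap.adjoint C g) ζ := by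
  refine (hΨ.hasFDerivAt.comp ζ ((C.hasFDerivAt).const_add w)).congr_fderiv ?_
  ext v
  simp [toDual_apply_apply, ContinuousLinearMap.adjoint_inner_left]

theorem IsLocalMin.hasGradientAt_eq_zero {f : E → ℝ} {g x : E} (hmin : IsLocalMin f x)
    (hg : HasGradientAt f g x) : g = 0 :=
  (toDual ℝ E).map_eq_zero_iff.1 (hmin.hasFDerivAt_eq_zero hg.hasFDerivAt)

end Gradient

section AugmentedTerm

variable {F : Type*} [NormedAddCommGroup F] [InnerProductSpace ℝ F]

def augTerm (α : ℝ) (p u : F) : ℝ := ⟪p, u⟫ + α / 2 * ‖u‖ ^ 2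

theorem convexOn_augTerm {α : ℝ} (hα : 0 ≤ α) (p : F) : ConvexOn ℝ Set.univ (augTerm α p) :=
  ((innerSL ℝ p).toLinearMap.convexOn convex_univ).add
    (((convexOn_norm convex_univ).pow (fun _ _ => norm_nonneg _) 2).smul
      (by positivity : 0 ≤ α / 2))

theorem hasGradientAt_augTerm [CompleteSpace F] (α : ℝ) (p u : F) :
    HasGradientAt (augTerm α p) (p + α • u) u := by
  refine (((innerSL ℝ p).hasFDerivAt (x := u)).add
    ((hasStrictFDerivAt_norm_sq u).hasFDerivAt.const_mul (α / 2))).congr_fderiv ?_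
  ext v
  simp only [add_apply, smul_apply, InnerProductSpace.toDual_apply_apply, innerSL_apply_apply,
    nsmul_eq_mul, smul_eq_mul, inner_add_left, real_inner_smul_left]
  ring

end AugmentedTerm

section Bregman

variable {n : ℕ} {φ : Eu n → ℝ} {φ' : Eu n → Eu n}

@[simp]
theorem Breg_self (v : Eu n) : Breg φ φ' v v = 0 := by simp [Breg]

theorem Breg_nonneg (hφ : ConvexOn ℝ Set.univ φ) {v : Eu n} (hv : HasGradientAt φ (φ' v) v)
    (u : Eu n) : 0 ≤ Breg φ φ' u v := by
  have := hφ.apply_add_fderiv_le (Set.mem_univ v) (Set.mem_univ u) hv.hasFDerivAt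
  rw [InnerProductSpace.toDual_apply_apply] at this
  simp only [Breg]
  linarith

theorem convexOn_Breg_sub (φ : Eu n → ℝ) (φ' : Eu n → Eu n) (v : Eu n) :
    ConvexOn ℝ Set.univ (fun ξ => Breg φ φ' ξ v - φ ξ) :=
  (((innerₛₗ ℝ (-φ' v)).convexOn convex_univ).add_const (⟪φ' v, v⟫ - φ v)).congr fun ξ _ => by
    simp only [Breg, Pi.add_apply, innerₛₗ_apply_apply, inner_neg_left, inner_sub_right]
    ring

theorem hasGradientAt_Breg (v : Eu n) {ζ : Eu n} (hζ : HasGradientAt φ (φ' ζ) ζ) :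
    HasGradientAt (fun ξ => Breg φ φ' ξ v) (φ' ζ - φ' v) ζ := by
  have hd := (hζ.hasFDerivAt.sub_const (φ v)).sub ((innerSL ℝ (φ' v)).hasFDerivAt.sub_const
    ⟪φ' v, v⟫)
  have hfun : (fun ξ => Breg φ φ' ξ v) = fun ξ => φ ξ - φ v - (innerSL ℝ (φ' v) ξ - ⟪φ' v, v⟫) := by
    funext ξ; simp [Breg, inner_sub_right]
  rw [hfun]
  refine hd.congr_fderiv ?_
  ext w; simp [InnerProductSpace.toDual_apply_apply]

theorem StrongConvex.of_convexOn_sub {μ : ℝ} {F G : Eu n → ℝ} (hF : StrongConvex μ F)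
    (hGF : ConvexOn ℝ Set.univ fun ξ => G ξ - F ξ) : StrongConvex μ G :=
  (ConvexOn.add hF hGF).congr fun ξ _ => by simp only [Pi.add_apply]; ring

theorem StrongConvex.mul_norm_sub_sq_le_Breg {μ : ℝ} (hφ : ConvexOn ℝ Set.univ φ)
    (hsc : StrongConvex μ φ) {v : Eu n} (hv : HasGradientAt φ (φ' v) v) (u : Eu n) :
    μ / 2 * ‖u - v‖ ^ 2 ≤ Breg φ φ' u v := by
  have hB : StrongConvexOn Set.univ μ (fun ξ => Breg φ φ' ξ v) :=
    strongConvexOn_iff_convex.2 (hsc.of_convexOn_sub (convexOn_Breg_sub φ φ' v))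
  simpa using hB.add_le_of_isMinOn (Set.mem_univ v) (Set.mem_univ u)
    (isMinOn_iff.2 fun ξ _ => by simpa using Breg_nonneg hφ hv ξ)

theorem breg_prox_descent {Φ f : Eu n → ℝ} {μ : ℝ} {a v : Eu n}
    (hΦf : ConvexOn ℝ Set.univ fun ξ => Φ ξ - f ξ) (hφ : ConvexOn ℝ Set.univ φ)
    (hv : HasGradientAt φ (φ' v) v) (hsc : StrongConvex μ f ∨ StrongConvex μ φ)
    (hmin : ∀ ξ, Φ a + Breg φ φ' a v ≤ Φ ξ + Breg φ φ' ξ v) :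
    Φ a + μ / 2 * ‖a - v‖ ^ 2 ≤ Φ v := by
  rcases hsc with hf | hφμ
  · have hG : StrongConvex μ (fun ξ => Φ ξ + Breg φ φ' ξ v) :=
      hf.of_convexOn_sub <| (hΦf.add (hφ.add (convexOn_Breg_sub φ φ' v))).congr
        fun ξ _ => by simp only [Pi.add_apply]; ring
    have hgrowth := (strongConvexOn_iff_convex.2 hG).add_le_of_isMinOn (Set.mem_univ a)
      (Set.mem_univ v) (isMinOn_iff.2 fun ξ _ => hmin ξ)
    have hB := Breg_nonneg hφ hv a
    rw [Breg_self, add_zero, norm_sub_rev] at hgrowth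
    linarith
  · have h1 := hmin v
    have h2 := hφμ.mul_norm_sub_sq_le_Breg hφ hv a
    rw [Breg_self, add_zero] at h1
    linarith

end Bregman

theorem Lag_eq_add_augTerm {n₁ n₂ n₃ m : ℕ} (f : Eu n₁ → ℝ) (g : Eu n₂ → ℝ) (h : Eu n₃ → ℝ)
    (A : Eu n₁ →L[ℝ] Eu m) (B : Eu n₂ →L[ℝ] Eu m) (C : Eu n₃ →L[ℝ] Eu m)
    (α : ℝ) (x : Eu n₁) (y : Eu n₂) (z : Eu n₃) (p : Eu m) :
    Lag f g h A B C α x y z p = f x + g y + h z + augTerm α p (A x + B y + C z) :=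
  add_assoc _ _ _

namespace BADMM

variable {n₁ n₂ n₃ m : ℕ} (P : BADMM n₁ n₂ n₃ m)

theorem L_update_x_le (k : ℕ) :
    P.L (P.x (k+1)) (P.y k) (P.z k) (P.p k) + P.μ₁ / 2 * ‖P.x (k+1) - P.x k‖ ^ 2 ≤
      P.L (P.x k) (P.y k) (P.z k) (P.p k) := by
  have hconv : ConvexOn ℝ Set.univ fun ξ => P.L ξ (P.y k) (P.z k) (P.p k) - P.f ξ :=
    (((convexOn_augTerm P.hα_pos.le (P.p k)).comp_add_clm (P.B (P.y k) + P.C (P.z k)) P.A).add_const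
      (P.g (P.y k) + P.h (P.z k))).congr fun ξ _ => by
        simp only [L, Lag_eq_add_augTerm, Pi.add_apply, add_comm (P.B _ + P.C _), ← add_assoc]
        ring
  exact breg_prox_descent (Φ := fun ξ => P.L ξ (P.y k) (P.z k) (P.p k)) hconv P.hφ₁_convex
    (P.hgrad_φ₁ _) P.hsc₁ (P.hx_min k)

theorem L_update_y_le (k : ℕ) :
    P.L (P.x (k+1)) (P.y (k+1)) (P.z k) (P.p k) + P.μ₂ / 2 * ‖P.y (k+1) - P.y k‖ ^ 2 ≤
      P.L (P.x (k+1)) (P.y k) (P.z k) (P.p k) := by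
  have hconv : ConvexOn ℝ Set.univ fun ξ => P.L (P.x (k+1)) ξ (P.z k) (P.p k) - P.g ξ :=
    (((convexOn_augTerm P.hα_pos.le (P.p k)).comp_add_clm (P.A (P.x (k+1)) + P.C (P.z k))
      P.B).add_const (P.f (P.x (k+1)) + P.h (P.z k))).congr fun ξ _ => by
        simp only [L, Lag_eq_add_augTerm, Pi.add_apply, add_right_comm (P.A _)]
        ring
  exact breg_prox_descent (Φ := fun ξ => P.L (P.x (k+1)) ξ (P.z k) (P.p k)) hconv
    P.hφ₂_convex (P.hgrad_φ₂ _) P.hsc₂ (P.hy_min k)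

theorem L_update_z_le (k : ℕ) :
    P.L (P.x (k+1)) (P.y (k+1)) (P.z (k+1)) (P.p k) + P.μ₃ / 2 * ‖P.z (k+1) - P.z k‖ ^ 2 ≤
      P.L (P.x (k+1)) (P.y (k+1)) (P.z k) (P.p k) := by
  have hconv : ConvexOn ℝ Set.univ fun ξ => P.L (P.x (k+1)) (P.y (k+1)) ξ (P.p k) - P.h ξ :=
    (((convexOn_augTerm P.hα_pos.le (P.p k)).comp_add_clm (P.A (P.x (k+1)) + P.B (P.y (k+1)))
      P.C).add_const (P.f (P.x (k+1)) + P.g (P.y (k+1)))).congr fun ξ _ => by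
        simp only [L, Lag_eq_add_augTerm, Pi.add_apply]
        ring
  exact breg_prox_descent (Φ := fun ξ => P.L (P.x (k+1)) (P.y (k+1)) ξ (P.p k)) hconv
    P.hφ₃_convex (P.hgrad_φ₃ _) P.hsc₃ (P.hz_min k)

theorem L_update_p (k : ℕ) :
    P.L (P.x (k+1)) (P.y (k+1)) (P.z (k+1)) (P.p (k+1)) =
      P.L (P.x (k+1)) (P.y (k+1)) (P.z (k+1)) (P.p k) + ‖P.p (k+1) - P.p k‖ ^ 2 / P.α := by
  simp only [L, Lag_eq_add_augTerm]
  set r := P.A (P.x (k+1)) + P.B (P.y (k+1)) + P.C (P.z (k+1))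
  have hp : P.p (k+1) = P.p k + P.α • r := P.hp_upd k
  have hα := P.hα_pos.ne'
  simp only [augTerm, hp, add_sub_cancel_left, inner_add_left, real_inner_smul_left,
    real_inner_self_eq_norm_sq, norm_smul, Real.norm_of_nonneg P.hα_pos.le]
  field_simp
  ring

theorem adjoint_C_p_succ (k : ℕ) :
    ContinuousLinearMap.adjoint P.C (P.p (k+1)) =
      P.φ₃' (P.z k) - P.h' (P.z (k+1)) - P.φ₃' (P.z (k+1)) := by
  have hmin : IsLocalMin (fun ξ => P.f (P.x (k+1)) + P.g (P.y (k+1)) + P.h ξ +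
      augTerm P.α (P.p k) (P.A (P.x (k+1)) + P.B (P.y (k+1)) + P.C ξ) +
      Breg P.φ₃ P.φ₃' ξ (P.z k)) (P.z (k+1)) :=
    Eventually.of_forall fun ξ => by simpa only [Lag_eq_add_augTerm] using P.hz_min k ξ
  have hstat := hmin.hasGradientAt_eq_zero ((((hasGradientAt_const _ _).add (P.hgrad_h _)).add
    ((hasGradientAt_augTerm _ _ _).comp_add_clm _ P.C)).add (hasGradientAt_Breg _ (P.hgrad_φ₃ _)))
  -- the gradient of the augmented term at the residual is `p k + α • r = p (k+1)`
  rw [← P.hp_upd k] at hstat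
  rw [← sub_eq_zero, ← hstat]
  abel

theorem σC_mul_norm_p_sub_sq_le (k : ℕ) :
    P.σC * ‖P.p (k+2) - P.p (k+1)‖ ^ 2 ≤
      2 * (P.ℓh + P.ℓ₃) ^ 2 * ‖P.z (k+2) - P.z (k+1)‖ ^ 2 +
        2 * P.ℓ₃ ^ 2 * ‖P.z (k+1) - P.z k‖ ^ 2 := by
  set s := ‖P.z (k+2) - P.z (k+1)‖
  set t := ‖P.z (k+1) - P.z k‖
  have hdual : ContinuousLinearMap.adjoint P.C (P.p (k+2) - P.p (k+1)) =
      (P.φ₃' (P.z (k+1)) - P.φ₃' (P.z k)) - (P.h' (P.z (k+2)) - P.h' (P.z (k+1))) -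
        (P.φ₃' (P.z (k+2)) - P.φ₃' (P.z (k+1))) := by
    rw [map_sub, adjoint_C_p_succ, adjoint_C_p_succ]
    abel
  have hnorm : ‖ContinuousLinearMap.adjoint P.C (P.p (k+2) - P.p (k+1))‖ ≤
      (P.ℓh + P.ℓ₃) * s + P.ℓ₃ * t := by
    rw [hdual]
    calc _ ≤ ‖P.φ₃' (P.z (k+1)) - P.φ₃' (P.z k)‖ + ‖P.h' (P.z (k+2)) - P.h' (P.z (k+1))‖ +
          ‖P.φ₃' (P.z (k+2)) - P.φ₃' (P.z (k+1))‖ :=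
          (norm_sub_le _ _).trans (add_le_add_left (norm_sub_le _ _) _)
      _ ≤ P.ℓ₃ * t + P.ℓh * s + P.ℓ₃ * s := by
          gcongr <;> [exact P.hlip_φ₃ _ _; exact P.hlip_h _ _; exact P.hlip_φ₃ _ _]
      _ = (P.ℓh + P.ℓ₃) * s + P.ℓ₃ * t := by ring
  calc P.σC * ‖P.p (k+2) - P.p (k+1)‖ ^ 2
      ≤ ‖ContinuousLinearMap.adjoint P.C (P.p (k+2) - P.p (k+1))‖ ^ 2 := P.hC_rank _
    _ ≤ ((P.ℓh + P.ℓ₃) * s + P.ℓ₃ * t) ^ 2 := by gcongr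
    _ ≤ 2 * (P.ℓh + P.ℓ₃) ^ 2 * s ^ 2 + 2 * P.ℓ₃ ^ 2 * t ^ 2 := by
        nlinarith [add_sq_le (a := (P.ℓh + P.ℓ₃) * s) (b := P.ℓ₃ * t)]

theorem norm_p_sub_sq_div_add_σ0_le (k : ℕ) :
    ‖P.p (k+2) - P.p (k+1)‖ ^ 2 / P.α + P.σ0 * ‖P.z (k+2) - P.z (k+1)‖ ^ 2 ≤
      P.μ₃ / 2 * ‖P.z (k+2) - P.z (k+1)‖ ^ 2 + P.σ0 * ‖P.z (k+1) - P.z k‖ ^ 2 := by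
  have hα := P.hα_pos
  have hσC := P.hσC_pos
  have hcoef : 2 * (P.ℓh + P.ℓ₃) ^ 2 / (P.α * P.σC) + P.σ0 ≤ P.μ₃ / 2 := by
    have hlarge := P.hα_large
    rw [div_lt_iff₀ (mul_pos P.hμ₃_pos hσC)] at hlarge
    rw [σ0, ← add_div, div_le_iff₀ (by positivity)]
    linarith
  calc ‖P.p (k+2) - P.p (k+1)‖ ^ 2 / P.α + P.σ0 * ‖P.z (k+2) - P.z (k+1)‖ ^ 2
      = P.σC * ‖P.p (k+2) - P.p (k+1)‖ ^ 2 / (P.α * P.σC) +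
          P.σ0 * ‖P.z (k+2) - P.z (k+1)‖ ^ 2 := by field_simp
    _ ≤ (2 * (P.ℓh + P.ℓ₃) ^ 2 * ‖P.z (k+2) - P.z (k+1)‖ ^ 2 +
          2 * P.ℓ₃ ^ 2 * ‖P.z (k+1) - P.z k‖ ^ 2) / (P.α * P.σC) +
          P.σ0 * ‖P.z (k+2) - P.z (k+1)‖ ^ 2 := by
        gcongr
        exact P.σC_mul_norm_p_sub_sq_le k
    _ = (2 * (P.ℓh + P.ℓ₃) ^ 2 / (P.α * P.σC) + P.σ0) * ‖P.z (k+2) - P.z (k+1)‖ ^ 2 +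
          P.σ0 * ‖P.z (k+1) - P.z k‖ ^ 2 := by rw [σ0]; ring
    _ ≤ P.μ₃ / 2 * ‖P.z (k+2) - P.z (k+1)‖ ^ 2 + P.σ0 * ‖P.z (k+1) - P.z k‖ ^ 2 := by
        gcongr

-- `lhatSeq k = L̂(ŵ^{k+1})`; the shift avoids `ŵ^0`, whose `z^{-1}` would be `z 0` by truncation.
def lhatSeq (k : ℕ) : ℝ := P.Lhat (P.x (k+1)) (P.y (k+1)) (P.z (k+1)) (P.p (k+1)) (P.z k)

theorem lhatSeq_succ_le (k : ℕ) : P.lhatSeq (k+1) ≤ P.lhatSeq k := by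
  have hx := P.L_update_x_le (k+1)
  have hy := P.L_update_y_le (k+1)
  have hz := P.L_update_z_le (k+1)
  have hp := P.L_update_p (k+1)
  have hdp := P.norm_p_sub_sq_div_add_σ0_le k
  have hμ₁ : 0 ≤ P.μ₁ / 2 * ‖P.x (k+2) - P.x (k+1)‖ ^ 2 := by have := P.hμ₁_pos; positivity
  have hμ₂ : 0 ≤ P.μ₂ / 2 * ‖P.y (k+2) - P.y (k+1)‖ ^ 2 := by have := P.hμ₂_pos; positivity
  simp only [lhatSeq, Lhat]
  linarith

theorem norm_adjoint_C_p_succ_le (k : ℕ) :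
    ‖ContinuousLinearMap.adjoint P.C (P.p (k+1))‖ ≤
      ‖P.h' 0‖ + P.ℓh * ‖P.z (k+1)‖ + P.ℓ₃ * ‖P.z (k+1) - P.z k‖ := by
  rw [adjoint_C_p_succ]
  calc _ = ‖(P.h' (P.z (k+1)) - P.h' 0) + P.h' 0 + (P.φ₃' (P.z (k+1)) - P.φ₃' (P.z k))‖ := by
        rw [← norm_neg]; congr 1; abel
    _ ≤ ‖P.h' (P.z (k+1)) - P.h' 0‖ + ‖P.h' 0‖ + ‖P.φ₃' (P.z (k+1)) - P.φ₃' (P.z k)‖ :=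
        norm_add₃_le
    _ ≤ P.ℓh * ‖P.z (k+1) - 0‖ + ‖P.h' 0‖ + P.ℓ₃ * ‖P.z (k+1) - P.z k‖ := by
        gcongr <;> [exact P.hlip_h _ _; exact P.hlip_φ₃ _ _]
    _ = _ := by rw [sub_zero]; ring

theorem exists_norm_p_le {M : ℝ} (hz : ∀ k, ‖P.z k‖ ≤ M) : ∃ R, ∀ k, ‖P.p k‖ ≤ R := by
  have hℓh := P.hℓh_nonneg
  have hℓ₃ := P.hℓ₃_nonneg
  obtain ⟨K, hK⟩ : ∃ K, ∀ k, ‖ContinuousLinearMap.adjoint P.C (P.p (k+1))‖ ≤ K :=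
    ⟨‖P.h' 0‖ + P.ℓh * M + P.ℓ₃ * (M + M), fun k => (P.norm_adjoint_C_p_succ_le k).trans <| by
      gcongr
      · exact hz _
      · exact (norm_sub_le _ _).trans (add_le_add (hz _) (hz _))⟩
  refine ⟨max ‖P.p 0‖ √(K ^ 2 / P.σC), fun k => ?_⟩
  cases k with
  | zero => exact le_max_left _ _
  | succ k =>
    refine le_max_of_le_right (Real.le_sqrt_of_sq_le ?_)
    rw [le_div_iff₀ P.hσC_pos, mul_comm]
    calc P.σC * ‖P.p (k+1)‖ ^ 2 ≤ ‖ContinuousLinearMap.adjoint P.C (P.p (k+1))‖ ^ 2 :=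
          P.hC_rank _
      _ ≤ K ^ 2 := by gcongr; exact hK k

theorem neg_le_inner_p_residual {R : ℝ} (hR : ∀ k, ‖P.p k‖ ≤ R) (k : ℕ) :
    -(R * (2 * R / P.α)) ≤
      ⟪P.p (k+1), P.A (P.x (k+1)) + P.B (P.y (k+1)) + P.C (P.z (k+1))⟫ := by
  set r := P.A (P.x (k+1)) + P.B (P.y (k+1)) + P.C (P.z (k+1))
  have hα := P.hα_pos
  have hr : ‖r‖ ≤ 2 * R / P.α := by
    rw [le_div_iff₀ hα, mul_comm, ← Real.norm_of_nonneg hα.le, ← norm_smul,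
      show P.α • r = P.p (k+1) - P.p k by rw [P.hp_upd k]; abel]
    linarith [norm_sub_le (P.p (k+1)) (P.p k), hR (k+1), hR k]
  exact (neg_le_neg (mul_le_mul (hR _) hr (norm_nonneg _) ((norm_nonneg _).trans (hR 0)))).trans
    (neg_le_of_abs_le (abs_real_inner_le_norm _ _))

theorem bddBelow_range_lhatSeq
    (hbdd : ∃ M : ℝ, ∀ k : ℕ, ‖P.x k‖ ≤ M ∧ ‖P.y k‖ ≤ M ∧ ‖P.z k‖ ≤ M) :
    BddBelow (Set.range P.lhatSeq) := by
  obtain ⟨M, hM⟩ := hbdd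
  obtain ⟨R, hR⟩ := P.exists_norm_p_le fun k => (hM k).2.2
  have hball : ∀ n, IsCompact (Metric.closedBall (0 : Eu n) M) := fun n => isCompact_closedBall 0 M
  have hh : Continuous P.h := continuous_iff_continuousAt.2 fun v => (P.hgrad_h v).continuousAt
  obtain ⟨cf, hcf⟩ := (P.hf_lsc.lowerSemicontinuousOn _).bddBelow_of_isCompact (hball _)
  obtain ⟨cg, hcg⟩ := (P.hg_lsc.lowerSemicontinuousOn _).bddBelow_of_isCompact (hball _)
  obtain ⟨ch, hch⟩ :=
    (hh.lowerSemicontinuous.lowerSemicontinuousOn _).bddBelow_of_isCompact (hball _)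
  refine ⟨cf + cg + ch - R * (2 * R / P.α), Set.forall_mem_range.2 fun k => ?_⟩
  have hf := hcf (Set.mem_image_of_mem _ (mem_closedBall_zero_iff.2 (hM (k+1)).1))
  have hg := hcg (Set.mem_image_of_mem _ (mem_closedBall_zero_iff.2 (hM (k+1)).2.1))
  have hhz := hch (Set.mem_image_of_mem _ (mem_closedBall_zero_iff.2 (hM (k+1)).2.2))
  have hinner := P.neg_le_inner_p_residual hR k
  have hpen : 0 ≤ P.α / 2 * ‖P.A (P.x (k+1)) + P.B (P.y (k+1)) + P.C (P.z (k+1))‖ ^ 2 := by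
    have := P.hα_pos; positivity
  have hσ0 : 0 ≤ P.σ0 * ‖P.z (k+1) - P.z k‖ ^ 2 := by
    have := P.hα_pos; have := P.hσC_pos; unfold σ0; positivity
  simp only [lhatSeq, Lhat, L, Lag]
  linarith

end BADMM

/-- if the primal iterates are bounded, then `(L̂(ŵ^k))_{k≥1}` is
nonincreasing and converges to a finite limit. -/
theorem badmm_Lhat_converges {n₁ n₂ n₃ m : ℕ} (P : BADMM n₁ n₂ n₃ m)
    (hbdd : ∃ M : ℝ, ∀ k : ℕ, ‖P.x k‖ ≤ M ∧ ‖P.y k‖ ≤ M ∧ ‖P.z k‖ ≤ M) :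
    (∀ k : ℕ, 1 ≤ k →
      P.Lhat (P.x (k+1)) (P.y (k+1)) (P.z (k+1)) (P.p (k+1)) (P.z k) ≤
        P.Lhat (P.x k) (P.y k) (P.z k) (P.p k) (P.z (k-1))) ∧
      ∃ c : ℝ, Tendsto
        (fun k : ℕ => P.Lhat (P.x (k+1)) (P.y (k+1)) (P.z (k+1)) (P.p (k+1)) (P.z k))
        atTop (nhds c) := by
  refine ⟨fun k hk => ?_, _, tendsto_atTop_ciInf (antitone_nat_of_succ_le P.lhatSeq_succ_le)
    (P.bddBelow_range_lhatSeq hbdd)⟩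
  obtain ⟨j, rfl⟩ := Nat.exists_eq_add_of_le' hk
  exact P.lhatSeq_succ_le j
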